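/- Let ρ and f be as above. Then the Hessian of f is bounded uniformly in ε: there exists a constant C (independent of ε > 0) such that ‖D²f(x)‖ ≤ C for all x ∈ ℝ³. -/

import Mathlib

noncomputable def rho (z : ℝ) : ℝ := if z < 1 then z ^ 2 - z ^ 3 / 3 else z - 1 / 3

noncomputable def fweight (ε : ℝ) (x : EuclideanSpace ℝ (Fin 3)) : ℝ :=
  rho ‖x‖ / (1 + ε * rho ‖x‖)

/-!
`fweight ε` is the radial function `x ↦ φ ‖x‖` with profile `φ = ρ / (1 + ε ρ)`. The Hessian of a
radial function is `(φ' r / r) I + (φ'' r - φ' r / r) x̂ ⊗ x̂`, and when `φ' 0 = 0` the mean value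
theorem gives `|φ' r| ≤ r sup |φ''|`, so the Hessian is bounded by `3 sup |φ''|`. Uniformity in `ε`
comes from `φ'' = ρ'' / (1 + ερ)² - 2ε ρ'² / (1 + ερ)³` together with `ρ'² ≤ 4ρ`: the last term is
at most `8 ερ / (1 + ερ)³ ≤ 8`.
-/

open Filter Topology Asymptotics

theorem abs_le_mul_of_abs_deriv_le {g g' : ℝ → ℝ} {B r : ℝ} (hg : ∀ s, HasDerivAt g (g' s) s)
    (h0 : g 0 = 0) (hB : ∀ s, 0 ≤ s → |g' s| ≤ B) (hr : 0 ≤ r) : |g r| ≤ B * r := by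
  have h := norm_image_sub_le_of_norm_deriv_le_segment' (f := g) (a := 0) (b := r)
    (fun s _ => (hg s).hasDerivWithinAt) (fun s hs => hB s hs.1) r ⟨hr, le_rfl⟩
  simpa [h0] using h

theorem hasDerivAt_ite_lt {f g f' g' : ℝ → ℝ} {a : ℝ} (hf : ∀ z, HasDerivAt f (f' z) z)
    (hg : ∀ z, HasDerivAt g (g' z) z) (hfg : f a = g a) (hfg' : f' a = g' a) (z : ℝ) :
    HasDerivAt (fun z => if z < a then f z else g z) (if z < a then f' z else g' z) z := by
  rcases lt_trichotomy z a with hz | rfl | hz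
  · rw [if_pos hz]
    refine (hf z).congr_of_eventuallyEq ?_
    filter_upwards [eventually_lt_nhds hz] with y hy using if_pos hy
  · rw [if_neg (lt_irrefl z), ← hasDerivWithinAt_univ, ← Set.Iic_union_Ici]
    refine HasDerivWithinAt.union ?_ ((hg z).hasDerivWithinAt.congr_of_mem
      (fun y hy => if_neg (not_lt.2 hy)) Set.self_mem_Ici)
    refine ((hf z).hasDerivWithinAt.congr (fun y hy => ?_) (by simp [hfg])).congr_deriv hfg'
    rcases (Set.mem_Iic.1 hy).lt_or_eq with hy | rfl
    · exact if_pos hy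
    · simp [hfg]
  · rw [if_neg hz.not_gt]
    refine (hg z).congr_of_eventuallyEq ?_
    filter_upwards [eventually_gt_nhds hz] with y hy using if_neg hy.not_gt

section Radial

variable {E : Type*} [NormedAddCommGroup E] [InnerProductSpace ℝ E]

theorem hasFDerivAt_norm_of_ne_zero {x : E} (hx : x ≠ 0) :
    HasFDerivAt (fun y : E => ‖y‖) (‖x‖⁻¹ • innerSL ℝ x) x := by
  have hx' : ‖x‖ ^ 2 ≠ 0 := by positivity
  have h := (hasStrictFDerivAt_norm_sq x).hasFDerivAt.sqrt hx'
  simp only [Real.sqrt_sq (norm_nonneg _)] at h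
  refine h.congr_fderiv ?_
  rw [← Nat.cast_smul_eq_nsmul ℝ, smul_smul, Nat.cast_ofNat]
  congr 1
  field_simp

theorem hasFDerivAt_comp_norm {φ φ' : ℝ → ℝ} {x : E} (hφ : HasDerivAt φ (φ' ‖x‖) ‖x‖)
    (h0 : φ' 0 = 0) : HasFDerivAt (fun y : E => φ ‖y‖) (innerSL ℝ ((φ' ‖x‖ / ‖x‖) • x)) x := by
  rcases eq_or_ne x 0 with rfl | hx
  · rw [norm_zero, h0] at hφ
    rw [smul_zero, map_zero, hasFDerivAt_iff_isLittleO_nhds_zero, ← isLittleO_norm_right]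
    have h := (hasDerivAt_iff_isLittleO.1 hφ).comp_tendsto (tendsto_norm_zero (E := E))
    simpa [Function.comp_def] using h
  · refine (hφ.comp_hasFDerivAt x (hasFDerivAt_norm_of_ne_zero hx)).congr_fderiv ?_
    rw [map_smul, smul_smul, div_eq_mul_inv]

theorem hasFDerivAt_smul_norm_zero {k : ℝ → ℝ} {c : ℝ} (hk : Tendsto k (𝓝[>] 0) (𝓝 c)) :
    HasFDerivAt (fun y : E => k ‖y‖ • y) (c • ContinuousLinearMap.id ℝ E) 0 := by
  rw [hasFDerivAt_iff_isLittleO_nhds_zero, ← nhdsNE_sup_pure, isLittleO_sup]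
  simp only [zero_add, smul_zero, sub_zero, smul_apply,
    ContinuousLinearMap.id_apply, ← sub_smul]
  have h : (fun y : E => k ‖y‖ - c) =o[𝓝[≠] 0] (fun _ => (1 : ℝ)) :=
    (isLittleO_one_iff ℝ).2 (tendsto_sub_nhds_zero_iff.2 (hk.comp tendsto_norm_nhdsNE_zero))
  exact ⟨by simpa using h.smul_isBigO (isBigO_refl (fun y : E => y) _),
    isLittleO_pure.2 (smul_zero _)⟩

theorem exists_hasFDerivAt_smul_norm_of_ne_zero {k : ℝ → ℝ} {k' : ℝ} {x : E} (hx : x ≠ 0)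
    (hk : HasDerivAt k k' ‖x‖) :
    ∃ D : E →L[ℝ] E, HasFDerivAt (fun y : E => k ‖y‖ • y) D x ∧ ‖D‖ ≤ |k ‖x‖| + |k'| * ‖x‖ := by
  have hN := hasFDerivAt_norm_of_ne_zero hx
  have hN1 : ‖‖x‖⁻¹ • innerSL ℝ x‖ ≤ 1 := by
    simpa using hN.le_of_lipschitz lipschitzWith_one_norm
  refine ⟨_, (hk.comp_hasFDerivAt x hN).smul (hasFDerivAt_id x), ?_⟩
  calc _ ≤ ‖k ‖x‖ • ContinuousLinearMap.id ℝ E‖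
          + ‖(k' • (‖x‖⁻¹ • innerSL ℝ x)).smulRight x‖ := norm_add_le _ _
    _ ≤ |k ‖x‖| * 1 + |k'| * 1 * ‖x‖ := by
        rw [ContinuousLinearMap.norm_smulRight_apply, norm_smul, norm_smul, Real.norm_eq_abs,
          Real.norm_eq_abs]
        gcongr
        exact ContinuousLinearMap.norm_id_le
    _ = _ := by ring

theorem exists_hasFDerivAt_div_norm_smul {φ' φ'' : ℝ → ℝ} {B : ℝ}
    (hφ' : ∀ r, HasDerivAt φ' (φ'' r) r) (h0 : φ' 0 = 0) (hB : ∀ r, 0 ≤ r → |φ'' r| ≤ B)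
    (x : E) :
    ∃ D : E →L[ℝ] E, HasFDerivAt (fun y : E => (φ' ‖y‖ / ‖y‖) • y) D x ∧ ‖D‖ ≤ 3 * B := by
  have hφ'_le (r : ℝ) (hr : 0 ≤ r) : |φ' r| ≤ B * r := abs_le_mul_of_abs_deriv_le hφ' h0 hB hr
  have hB0 : 0 ≤ B := (abs_nonneg _).trans (hB 0 le_rfl)
  rcases eq_or_ne x 0 with rfl | hx
  · have hslope := (hasDerivAt_iff_tendsto_slope.1 (hφ' 0)).mono_left (nhdsGT_le_nhdsNE 0)
    refine ⟨_, hasFDerivAt_smul_norm_zero (k := fun r => φ' r / r) (hslope.congr fun r => ?_), ?_⟩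
    · simp [slope_def_field, h0]
    · calc ‖φ'' 0 • ContinuousLinearMap.id ℝ E‖ ≤ |φ'' 0| * 1 := by
            rw [norm_smul, Real.norm_eq_abs]; gcongr; exact ContinuousLinearMap.norm_id_le
        _ ≤ 3 * B := by linarith [hB 0 le_rfl]
  · set r := ‖x‖
    have hr : 0 < r := norm_pos_iff.2 hx
    obtain ⟨D, hD, hDB⟩ := exists_hasFDerivAt_smul_norm_of_ne_zero (k := fun s => φ' s / s) hx
      ((hφ' r).div (hasDerivAt_id' r) hr.ne')
    refine ⟨D, hD, hDB.trans ?_⟩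
    have h1 : |φ' r / r| ≤ B := by
      rw [abs_div, abs_of_pos hr, div_le_iff₀ hr]; exact hφ'_le r hr.le
    have h2 : |(φ'' r * r - φ' r * 1) / r ^ 2| * r ≤ 2 * B := calc
      _ = |φ'' r * r - φ' r| / r := by
        rw [abs_div, abs_of_pos (by positivity : 0 < r ^ 2), mul_one]; field_simp
      _ ≤ (|φ'' r| * r + |φ' r|) / r := by
        gcongr; exact (abs_sub _ _).trans (by rw [abs_mul, abs_of_pos hr])
      _ ≤ (B * r + B * r) / r := by gcongr; exacts [hB r hr.le, hφ'_le r hr.le]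
      _ = 2 * B := by field_simp; ring
    linarith

theorem norm_iteratedFDeriv_two_comp_norm_le {φ φ' φ'' : ℝ → ℝ} {B : ℝ}
    (hφ : ∀ r, HasDerivAt φ (φ' r) r) (hφ' : ∀ r, HasDerivAt φ' (φ'' r) r) (h0 : φ' 0 = 0)
    (hB : ∀ r, 0 ≤ r → |φ'' r| ≤ B) (x : E) :
    ‖iteratedFDeriv ℝ 2 (fun y : E => φ ‖y‖) x‖ ≤ 3 * B := by
  have hgrad : fderiv ℝ (fun y : E => φ ‖y‖) = fun y => innerSL ℝ ((φ' ‖y‖ / ‖y‖) • y) :=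
    funext fun y => (hasFDerivAt_comp_norm (hφ _) h0).fderiv
  obtain ⟨D, hD, hDB⟩ := exists_hasFDerivAt_div_norm_smul hφ' h0 hB x
  calc ‖iteratedFDeriv ℝ 2 (fun y : E => φ ‖y‖) x‖
      = ‖fderiv ℝ (fderiv ℝ (fun y : E => φ ‖y‖)) x‖ := by
        rw [← norm_iteratedFDeriv_fderiv (n := 1), ← norm_iteratedFDeriv_fderiv (n := 0),
          norm_iteratedFDeriv_zero]
    _ = ‖(innerSL ℝ).comp D‖ := by
        rw [hgrad]
        exact congrArg _ ((innerSL ℝ).hasFDerivAt.comp x hD).fderiv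
    _ ≤ ‖innerSL ℝ (E := E)‖ * ‖D‖ := ContinuousLinearMap.opNorm_comp_le _ _
    _ ≤ 1 * (3 * B) := by gcongr; exact norm_innerSL_le ℝ
    _ = 3 * B := one_mul _

end Radial

noncomputable def rho' (z : ℝ) : ℝ := if z < 1 then 2 * z - z ^ 2 else 1

noncomputable def rho'' (z : ℝ) : ℝ := if z < 1 then 2 - 2 * z else 0

theorem hasDerivAt_rho (z : ℝ) : HasDerivAt rho (rho' z) z :=
  hasDerivAt_ite_lt (f := fun z => z ^ 2 - z ^ 3 / 3) (f' := fun z => 2 * z - z ^ 2)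
    (fun z => ((hasDerivAt_pow 2 z).sub ((hasDerivAt_pow 3 z).div_const 3)).congr_deriv (by ring))
    (fun z => (hasDerivAt_id' z).sub_const _) (by norm_num) (by norm_num) z

theorem hasDerivAt_rho' (z : ℝ) : HasDerivAt rho' (rho'' z) z :=
  hasDerivAt_ite_lt (f := fun z => 2 * z - z ^ 2) (f' := fun z => 2 - 2 * z)
    (fun z => (((hasDerivAt_id' z).const_mul 2).sub (hasDerivAt_pow 2 z)).congr_deriv (by ring))
    (fun z => hasDerivAt_const _ _) (by norm_num) (by norm_num) z

theorem rho_nonneg (z : ℝ) : 0 ≤ rho z := by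
  unfold rho
  split_ifs with h
  · nlinarith [sq_nonneg z]
  · linarith

theorem abs_rho''_le_two {z : ℝ} (hz : 0 ≤ z) : |rho'' z| ≤ 2 := by
  unfold rho''
  split_ifs with h <;> rw [abs_le] <;> constructor <;> linarith

theorem rho'_sq_le {z : ℝ} (hz : 0 ≤ z) : rho' z ^ 2 ≤ 4 * rho z := by
  unfold rho' rho
  split_ifs with h
  · nlinarith [pow_nonneg hz 3]
  · nlinarith

section Saturation

variable {ε : ℝ}

theorem one_le_one_add_mul_rho (hε : 0 ≤ ε) (z : ℝ) : 1 ≤ 1 + ε * rho z :=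
  le_add_of_nonneg_right (mul_nonneg hε (rho_nonneg z))

theorem hasDerivAt_rho_div (hε : 0 ≤ ε) (z : ℝ) :
    HasDerivAt (fun z => rho z / (1 + ε * rho z)) (rho' z / (1 + ε * rho z) ^ 2) z := by
  have hd : 0 < 1 + ε * rho z := zero_lt_one.trans_le (one_le_one_add_mul_rho hε z)
  refine ((hasDerivAt_rho z).div (((hasDerivAt_rho z).const_mul ε).const_add 1)
    hd.ne').congr_deriv ?_
  field_simp
  ring

theorem hasDerivAt_rho'_div (hε : 0 ≤ ε) (z : ℝ) :
    HasDerivAt (fun z => rho' z / (1 + ε * rho z) ^ 2)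
      (rho'' z / (1 + ε * rho z) ^ 2 - 2 * ε * rho' z ^ 2 / (1 + ε * rho z) ^ 3) z := by
  have hd : 0 < 1 + ε * rho z := zero_lt_one.trans_le (one_le_one_add_mul_rho hε z)
  have hden : HasDerivAt (fun z => (1 + ε * rho z) ^ 2) (2 * (1 + ε * rho z) * (ε * rho' z)) z :=
    ((((hasDerivAt_rho z).const_mul ε).const_add 1).pow 2).congr_deriv (by ring)
  refine ((hasDerivAt_rho' z).div hden (by positivity)).congr_deriv ?_
  field_simp

theorem abs_rho''_div_sub_le (hε : 0 ≤ ε) {z : ℝ} (hz : 0 ≤ z) :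
    |rho'' z / (1 + ε * rho z) ^ 2 - 2 * ε * rho' z ^ 2 / (1 + ε * rho z) ^ 3| ≤ 10 := by
  have hd1 := one_le_one_add_mul_rho hε z
  set d := 1 + ε * rho z
  have hd0 : 0 < d := by linarith
  have h1 : |rho'' z / d ^ 2| ≤ 2 := by
    rw [abs_div, abs_of_pos (pow_pos hd0 2)]
    exact (div_le_self (abs_nonneg _) (one_le_pow₀ hd1)).trans (abs_rho''_le_two hz)
  have h2 : |2 * ε * rho' z ^ 2 / d ^ 3| ≤ 8 := by
    rw [abs_of_nonneg (by positivity), div_le_iff₀ (by positivity)]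
    calc 2 * ε * rho' z ^ 2 ≤ 8 * (ε * rho z) := by nlinarith [rho'_sq_le hz]
      _ ≤ 8 * d ^ 3 := by gcongr; nlinarith [one_le_pow₀ (n := 2) hd1]
  calc _ ≤ |rho'' z / d ^ 2| + |2 * ε * rho' z ^ 2 / d ^ 3| := abs_sub _ _
    _ ≤ 10 := by linarith

end Saturation

theorem fweight_hessian_bounded :
    ∃ C : ℝ, ∀ ε : ℝ, 0 < ε → ∀ x : EuclideanSpace ℝ (Fin 3),
      ‖iteratedFDeriv ℝ 2 (fweight ε) x‖ ≤ C :=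
  ⟨30, fun _ hε x => (norm_iteratedFDeriv_two_comp_norm_le (hasDerivAt_rho_div hε.le)
    (hasDerivAt_rho'_div hε.le) (by simp [rho']) (fun _ hr => abs_rho''_div_sub_le hε.le hr)
    x).trans (by norm_num)⟩
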